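/- Let ρ₁ and ρ₂ be admissible metrics on a standard probability space (X, μ). Then for every ε > 0 there exists a measurable set K ⊆ X with μ(K) > 1 − ε such that the topologies induced on K by ρ₁ and by ρ₂ coincide (equivalently, the identity map from (K, ρ₁) to (K, ρ₂) is a homeomorphism). -/

import Mathlib

open MeasureTheory Set
open scoped ENNReal

namespace VirtCont

variable {X Y : Type*}

/-- A semimetric on a set `S`. -/
def IsSemimetricOn (ρ : X → X → ℝ) (S : Set X) : Prop :=
  (∀ x ∈ S, ∀ y ∈ S, 0 ≤ ρ x y) ∧ (∀ x ∈ S, ρ x x = 0) ∧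
  (∀ x ∈ S, ∀ y ∈ S, ρ x y = ρ y x) ∧
  (∀ x ∈ S, ∀ y ∈ S, ∀ z ∈ S, ρ x z ≤ ρ x y + ρ y z)

/-- Separability of the semimetric space `(S, ρ)`. -/
def SepOn (ρ : X → X → ℝ) (S : Set X) : Prop :=
  ∃ D : Set X, D ⊆ S ∧ D.Countable ∧ ∀ x ∈ S, ∀ ε : ℝ, 0 < ε → ∃ d ∈ D, ρ x d < ε

/-- An admissible semimetric on `(S, μ|_S)`: a semimetric on `S`, measurable as a function
of two variables, for which some subset of `S` of full measure in `S` is separable. -/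
def IsAdmissibleSemimetricOn [MeasurableSpace X] (μ : Measure X) (S : Set X)
    (ρ : X → X → ℝ) : Prop :=
  IsSemimetricOn ρ S ∧
  Measurable (fun p : S × S => ρ (p.1 : X) (p.2 : X)) ∧
  ∃ X₀ : Set X, X₀ ⊆ S ∧ MeasurableSet X₀ ∧ μ (S \ X₀) = 0 ∧ SepOn ρ X₀

/-- An admissible semimetric on the whole space `(X, μ)`. -/
def IsAdmissibleSemimetric [MeasurableSpace X] (μ : Measure X) (ρ : X → X → ℝ) : Prop :=
  IsSemimetricOn ρ univ ∧
  Measurable (fun p : X × X => ρ p.1 p.2) ∧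
  ∃ X₀ : Set X, MeasurableSet X₀ ∧ μ X₀ = 1 ∧ SepOn ρ X₀

/-- An admissible metric on `(X, μ)`. -/
def IsAdmissibleMetric [MeasurableSpace X] (μ : Measure X) (ρ : X → X → ℝ) : Prop :=
  IsAdmissibleSemimetric μ ρ ∧ ∀ x y : X, ρ x y = 0 → x = y

/-- Continuity of `f` on `A ×ˢ B` with respect to the product of the (semi)metric
topologies of `ρX` and `ρY`. -/
def ContOnProd (ρX : X → X → ℝ) (ρY : Y → Y → ℝ) (A : Set X) (B : Set Y)
    (f : X × Y → ℝ) : Prop :=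
  ∀ x ∈ A, ∀ y ∈ B, ∀ ε : ℝ, 0 < ε → ∃ δ : ℝ, 0 < δ ∧
    ∀ x' ∈ A, ∀ y' ∈ B, ρX x x' < δ → ρY y y' < δ → |f (x, y) - f (x', y')| < ε

variable [MeasurableSpace X] [MeasurableSpace Y]

/-- A properly virtually continuous function of two variables. -/
def ProperlyVirtuallyContinuous (μ : Measure X) (ν : Measure Y) (f : X × Y → ℝ) : Prop :=
  Measurable f ∧
  ∀ ε : ℝ, 0 < ε → ∃ (X' : Set X) (Y' : Set Y),
    MeasurableSet X' ∧ MeasurableSet Y' ∧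
    1 - ENNReal.ofReal ε ≤ μ X' ∧ 1 - ENNReal.ofReal ε ≤ ν Y' ∧
    ∃ ρX : X → X → ℝ, ∃ ρY : Y → Y → ℝ,
      IsAdmissibleSemimetricOn μ X' ρX ∧ IsAdmissibleSemimetricOn ν Y' ρY ∧
      ContOnProd ρX ρY X' Y' f

/-- A virtually continuous function: one which agrees almost everywhere with a
properly virtually continuous function. -/
def VirtuallyContinuous (μ : Measure X) (ν : Measure Y) (f : X × Y → ℝ) : Prop :=
  Measurable f ∧ ∃ g : X × Y → ℝ,
    ProperlyVirtuallyContinuous μ ν g ∧ f =ᵐ[μ.prod ν] g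

/-- A virtually open subset of a product of measure spaces. -/
def VirtuallyOpen (μ : Measure X) (ν : Measure Y) (Z : Set (X × Y)) : Prop :=
  ∃ (X' : Set X) (Y' : Set Y), MeasurableSet X' ∧ MeasurableSet Y' ∧
    μ X' = 1 ∧ ν Y' = 1 ∧
    ∃ (A : ℕ → Set X) (B : ℕ → Set Y),
      (∀ n, MeasurableSet (A n)) ∧ (∀ n, MeasurableSet (B n)) ∧
      Z ∩ (X' ×ˢ Y') = ⋃ n, (A n) ×ˢ (B n)

/-- A virtually closed subset of a product of measure spaces. -/
def VirtuallyClosed (μ : Measure X) (ν : Measure Y) (Z : Set (X × Y)) : Prop :=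
  VirtuallyOpen μ ν Zᶜ

/-- Proper thickness of a subset of a product of measure spaces. -/
noncomputable def sthi (μ : Measure X) (ν : Measure Y) (Z : Set (X × Y)) : ℝ≥0∞ :=
  ⨅ (A : Set X) (B : Set Y) (_ : MeasurableSet A) (_ : MeasurableSet B)
    (_ : Z ⊆ (A ×ˢ (univ : Set Y)) ∪ ((univ : Set X) ×ˢ B)), μ A + ν B

/-- Thickness of a subset of a product of measure spaces. -/
noncomputable def thi (μ : Measure X) (ν : Measure Y) (Z : Set (X × Y)) : ℝ≥0∞ :=
  ⨅ (A : Set X) (B : Set Y) (_ : MeasurableSet A) (_ : MeasurableSet B)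
    (_ : (μ.prod ν) (Z \ ((A ×ˢ (univ : Set Y)) ∪ ((univ : Set X) ×ˢ B))) = 0), μ A + ν B

/-- The distance `τ` between two measurable functions on a product space. -/
noncomputable def tauDist (μ : Measure X) (ν : Measure Y) (f g : X × Y → ℝ) : ℝ :=
  sInf {ε : ℝ | 0 < ε ∧ thi μ ν {p : X × Y | ε < |f p - g p|} ≤ ENNReal.ofReal ε}

/-- The `SR¹`-norm of a measurable function on a product space. -/
noncomputable def srNorm (μ : Measure X) (ν : Measure Y) (f : X × Y → ℝ) : ℝ≥0∞ :=
  ⨅ (a : X → ℝ) (b : Y → ℝ) (_ : Measurable a) (_ : Measurable b)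
    (_ : ∀ x, 0 ≤ a x) (_ : ∀ y, 0 ≤ b y)
    (_ : ∀ᵐ p ∂μ.prod ν, |f p| ≤ a p.1 + b p.2),
    (∫⁻ x, ENNReal.ofReal (a x) ∂μ) + (∫⁻ y, ENNReal.ofReal (b y) ∂ν)


section AuxLemmas

open Filter Topology
open scoped BoundedContinuousFunction

private lemma VCaux.geom_sum_bound (c : ℝ≥0∞) : (∑' n : ℕ, c * 2⁻¹ ^ n) = 2 * c := by
  rw [ENNReal.tsum_mul_left, ENNReal.tsum_geometric, ENNReal.one_sub_inv_two, mul_comm]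
  norm_num

private lemma VCaux.exists_compact_compl_le {α : Type*} [MeasurableSpace α] [TopologicalSpace α]
    [PolishSpace α] [BorelSpace α] [Nonempty α] (μ : Measure α) [IsFiniteMeasure μ]
    {ε : ℝ≥0∞} (hε : ε ≠ 0) :
    ∃ C : Set α, IsCompact C ∧ μ Cᶜ ≤ 2 * ε := by
  letI := TopologicalSpace.upgradeIsCompletelyMetrizable α
  set u := TopologicalSpace.denseSeq α with hu_def
  have hu : DenseRange u := TopologicalSpace.denseRange_denseSeq α
  have key : ∀ n : ℕ, ∃ M : ℕ,
      μ (⋃ m ∈ Set.Iic M, Metric.closedBall (u m) (1/(n+1)))ᶜ ≤ ε * 2⁻¹ ^ n := by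
    intro n
    set S : ℕ → Set α := fun M => (⋃ m ∈ Set.Iic M, Metric.closedBall (u m) (1/(n+1)))ᶜ with hS
    have hmeas : ∀ M, NullMeasurableSet (S M) μ := fun M =>
      (MeasurableSet.biUnion (Set.finite_Iic M).countable
        (fun m _ => Metric.isClosed_closedBall.measurableSet)).compl.nullMeasurableSet
    have hanti : Antitone S := fun a b hab =>
      compl_subset_compl.2 (Set.biUnion_subset_biUnion_left (Set.Iic_subset_Iic.2 hab))
    have hempty : ⋂ M, S M = ∅ := by
      ext x
      simp only [Set.mem_iInter, Set.mem_empty_iff_false, iff_false, not_forall]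
      obtain ⟨m, hm⟩ := Metric.denseRange_iff.1 hu x (1/(n+1)) (by positivity)
      refine ⟨m, ?_⟩
      simp only [hS, Set.mem_compl_iff, not_not, Set.mem_iUnion]
      exact ⟨m, Set.mem_Iic.2 le_rfl, Metric.mem_closedBall.2 hm.le⟩
    have htend := tendsto_measure_iInter_atTop hmeas hanti ⟨0, measure_ne_top μ _⟩
    rw [hempty, measure_empty] at htend
    have hpos : (0 : ℝ≥0∞) < ε * 2⁻¹ ^ n :=
      ENNReal.mul_pos hε (pow_ne_zero n (by norm_num))
    obtain ⟨M, hM⟩ := (htend.eventually_le_const hpos).exists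
    exact ⟨M, hM⟩
  choose M hM using key
  refine ⟨⋂ n, ⋃ m ∈ Set.Iic (M n), Metric.closedBall (u m) (1/(n+1)), ?_, ?_⟩
  · refine TotallyBounded.isCompact_of_isClosed ?_ ?_
    · rw [Metric.totallyBounded_iff]
      intro δ hδ
      obtain ⟨n, hn⟩ := exists_nat_one_div_lt hδ
      refine ⟨u '' Set.Iic (M n), (Set.finite_Iic _).image u, ?_⟩
      refine (Set.iInter_subset _ n).trans ?_
      refine Set.iUnion₂_subset fun m hm => ?_
      refine subset_trans (Metric.closedBall_subset_ball hn) ?_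
      exact Set.subset_iUnion₂ (s := fun y (_ : y ∈ u '' Set.Iic (M n)) => Metric.ball y δ)
        (u m) ⟨m, hm, rfl⟩
    · exact isClosed_iInter fun n => (Set.finite_Iic (M n)).isClosed_biUnion
        fun m _ => Metric.isClosed_closedBall
  · rw [Set.compl_iInter]
    refine (measure_iUnion_le _).trans ?_
    calc ∑' n, μ (⋃ m ∈ Set.Iic (M n), Metric.closedBall (u m) (1/(n+1)))ᶜ
        ≤ ∑' n : ℕ, ε * 2⁻¹ ^ n := ENNReal.tsum_le_tsum hM
      _ = 2 * ε := VCaux.geom_sum_bound ε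

private lemma VCaux.lusin_lite {α : Type*} [MeasurableSpace α] [TopologicalSpace α]
    [PolishSpace α] [BorelSpace α] (μ : Measure α) [IsFiniteMeasure μ]
    (f : α → ℝ) (hf : Measurable f) (hfb : ∀ x, |f x| ≤ 1)
    {ε : ℝ≥0∞} (hε : ε ≠ 0) :
    ∃ T : Set α, MeasurableSet T ∧ μ Tᶜ ≤ 2 * ε ∧ ContinuousOn f T := by
  letI := TopologicalSpace.upgradeIsCompletelyMetrizable α
  have hint : Integrable f μ := by
    refine ⟨hf.aestronglyMeasurable, HasFiniteIntegral.of_bounded (C := 1) ?_⟩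
    exact ae_of_all _ fun x => by simpa [Real.norm_eq_abs] using hfb x
  have key : ∀ k : ℕ, ∃ g : α →ᵇ ℝ,
      (∫⁻ x, ‖f x - g x‖₊ ∂μ) ≤ ENNReal.ofReal ((1/2)^k) * (ε * 2⁻¹ ^ k) := by
    intro k
    refine hint.exists_boundedContinuous_lintegral_sub_le ?_ |>.imp fun g hg => hg.1
    exact mul_ne_zero (by simp only [ne_eq, ENNReal.ofReal_eq_zero, not_le]; positivity)
      (ENNReal.mul_pos hε (pow_ne_zero k (by norm_num))).ne'
  choose g hg using key
  set bad : ℕ → Set α := fun k =>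
    {x | ENNReal.ofReal ((1/2)^k) ≤ (‖f x - g k x‖₊ : ℝ≥0∞)} with hbad
  have hbadmeas : ∀ k, MeasurableSet (bad k) :=  by
    intro k
    have : Measurable fun x => (‖f x - g k x‖₊ : ℝ≥0∞) :=
      (hf.sub (g k).continuous.measurable).nnnorm.coe_nnreal_ennreal
    exact measurableSet_le measurable_const this
  have hbadμ : ∀ k, μ (bad k) ≤ ε * 2⁻¹ ^ k := by
    intro k
    have hmar := mul_meas_ge_le_lintegral₀ (μ := μ)
      ((hf.sub (g k).continuous.measurable).nnnorm.coe_nnreal_ennreal.aemeasurable)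
      (ENNReal.ofReal ((1/2)^k))
    have h0 : ENNReal.ofReal ((1/2:ℝ)^k) ≠ 0 := by
      simp only [ne_eq, ENNReal.ofReal_eq_zero, not_le]; positivity
    have hmar2 : ENNReal.ofReal ((1/2)^k) * μ (bad k)
        ≤ ENNReal.ofReal ((1/2)^k) * (ε * 2⁻¹ ^ k) := hmar.trans (hg k)
    exact (ENNReal.mul_le_mul_iff_right h0 ENNReal.ofReal_ne_top).1 hmar2
  refine ⟨(⋃ k, bad k)ᶜ, (MeasurableSet.iUnion hbadmeas).compl, ?_, ?_⟩
  · rw [compl_compl]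
    refine (measure_iUnion_le _).trans ?_
    calc ∑' k, μ (bad k) ≤ ∑' k : ℕ, ε * 2⁻¹ ^ k := ENNReal.tsum_le_tsum hbadμ
      _ = 2 * ε := VCaux.geom_sum_bound ε
  · have hclose : ∀ k, ∀ x ∈ (⋃ k, bad k)ᶜ, dist (f x) (g k x) < (1/2)^k := by
      intro k x hx
      simp only [Set.mem_compl_iff, Set.mem_iUnion, not_exists, hbad, Set.mem_setOf_eq,
        not_le] at hx
      have := hx k
      rw [← enorm_eq_nnnorm, ← ofReal_norm, ENNReal.ofReal_lt_ofReal_iff (by positivity)] at this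
      simpa [Real.dist_eq, Real.norm_eq_abs] using this
    have htu : TendstoUniformlyOn (fun k x => g k x) f atTop (⋃ k, bad k)ᶜ := by
      rw [Metric.tendstoUniformlyOn_iff]
      intro δ hδ
      obtain ⟨K, hK⟩ := exists_pow_lt_of_lt_one hδ (by norm_num : (1/2:ℝ) < 1)
      filter_upwards [eventually_ge_atTop K] with k hk x hx
      calc dist (f x) (g k x) < (1/2)^k := hclose k x hx
        _ ≤ (1/2)^K := pow_le_pow_of_le_one (by norm_num) (by norm_num) hk
        _ < δ := hK
    exact htu.continuousOn (Filter.Eventually.of_forall fun k => (g k).continuous.continuousOn).frequently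

end AuxLemmas


/-- for two admissible metrics `ρ₁`, `ρ₂` on a standard probability space
`(X, μ)` and any `ε > 0` there is a measurable `K` with `μ(K) > 1 − ε` on which the
topologies induced by `ρ₁` and `ρ₂` coincide (the identity map is a homeomorphism,
expressed here by mutual ε–δ continuity at every point of `K`). -/
theorem topologies_coincide_on_large_set
    [StandardBorelSpace X] (μ : Measure X) [IsProbabilityMeasure μ] [NullSingletonClass μ]
    (ρ₁ ρ₂ : X → X → ℝ)
    (h₁ : IsAdmissibleMetric μ ρ₁) (h₂ : IsAdmissibleMetric μ ρ₂)
    (ε : ℝ) (hε : 0 < ε) :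
    ∃ K : Set X, MeasurableSet K ∧ 1 - ENNReal.ofReal ε < μ K ∧
      (∀ x ∈ K, ∀ δ : ℝ, 0 < δ → ∃ η : ℝ, 0 < η ∧ ∀ y ∈ K, ρ₁ x y < η → ρ₂ x y < δ) ∧
      (∀ x ∈ K, ∀ δ : ℝ, 0 < δ → ∃ η : ℝ, 0 < η ∧ ∀ y ∈ K, ρ₂ x y < η → ρ₁ x y < δ) := by
  classical
  letI := upgradeStandardBorel X
  obtain ⟨⟨hsm₁, hmeas₁, X₀₁, hX₀₁meas, hX₀₁μ, D₁, hD₁sub, hD₁cnt, hD₁dense⟩, hmet₁⟩ := h₁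
  obtain ⟨⟨hsm₂, hmeas₂, X₀₂, hX₀₂meas, hX₀₂μ, D₂, hD₂sub, hD₂cnt, hD₂dense⟩, hmet₂⟩ := h₂
  have nn₁ : ∀ a b, 0 ≤ ρ₁ a b := fun a b => hsm₁.1 a (mem_univ a) b (mem_univ b)
  have sy₁ : ∀ a b, ρ₁ a b = ρ₁ b a := fun a b => hsm₁.2.2.1 a (mem_univ a) b (mem_univ b)
  have tr₁ : ∀ a b c, ρ₁ a c ≤ ρ₁ a b + ρ₁ b c := fun a b c =>
    hsm₁.2.2.2 a (mem_univ a) b (mem_univ b) c (mem_univ c)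
  have nn₂ : ∀ a b, 0 ≤ ρ₂ a b := fun a b => hsm₂.1 a (mem_univ a) b (mem_univ b)
  have sy₂ : ∀ a b, ρ₂ a b = ρ₂ b a := fun a b => hsm₂.2.2.1 a (mem_univ a) b (mem_univ b)
  have tr₂ : ∀ a b c, ρ₂ a c ≤ ρ₂ a b + ρ₂ b c := fun a b c =>
    hsm₂.2.2.2 a (mem_univ a) b (mem_univ b) c (mem_univ c)
  have hX₀₁ne : X₀₁.Nonempty :=
    nonempty_of_measure_ne_zero (μ := μ) (by rw [hX₀₁μ]; exact one_ne_zero)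
  haveI : Nonempty X := ⟨hX₀₁ne.some⟩
  have hX₀₂ne : X₀₂.Nonempty :=
    nonempty_of_measure_ne_zero (μ := μ) (by rw [hX₀₂μ]; exact one_ne_zero)
  have hD₁ne : D₁.Nonempty := by
    obtain ⟨d, hd, -⟩ := hD₁dense hX₀₁ne.some hX₀₁ne.some_mem 1 one_pos
    exact ⟨d, hd⟩
  have hD₂ne : D₂.Nonempty := by
    obtain ⟨d, hd, -⟩ := hD₂dense hX₀₂ne.some hX₀₂ne.some_mem 1 one_pos
    exact ⟨d, hd⟩
  obtain ⟨q₁, hq₁⟩ := hD₁cnt.exists_eq_range hD₁ne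
  obtain ⟨q₂, hq₂⟩ := hD₂cnt.exists_eq_range hD₂ne
  -- error budget
  set m : ℝ≥0∞ := min (ENNReal.ofReal ε) 1 with hm_def
  have hm0 : m ≠ 0 := (lt_min (ENNReal.ofReal_pos.2 hε) zero_lt_one).ne'
  have hm1 : m ≤ 1 := min_le_right _ _
  have hmtop : m ≠ ∞ := (lt_of_le_of_lt hm1 ENNReal.one_lt_top).ne
  set c : ℝ≥0∞ := m * 16⁻¹ with hc_def
  have hc0 : c ≠ 0 := mul_ne_zero hm0 (ENNReal.inv_ne_zero.2 (by norm_num))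
  have hctop : c ≠ ∞ := ENNReal.mul_ne_top hmtop (ENNReal.inv_ne_top.2 (by norm_num))
  -- Lusin-type sets for the two countable families of functions
  have lus₁ : ∀ n : ℕ, ∃ T, MeasurableSet T ∧ μ Tᶜ ≤ 2 * (c * 2⁻¹ ^ n) ∧
      ContinuousOn (fun x => min (ρ₁ x (q₁ n)) 1) T := by
    intro n
    refine VCaux.lusin_lite μ _ ?_ ?_ (mul_ne_zero hc0 (pow_ne_zero n (by norm_num)))
    · exact (hmeas₁.comp (measurable_id.prodMk measurable_const)).min measurable_const
    · intro x
      rw [abs_le]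
      refine ⟨?_, min_le_right _ _⟩
      have := le_min (nn₁ x (q₁ n)) zero_le_one
      linarith
  have lus₂ : ∀ n : ℕ, ∃ T, MeasurableSet T ∧ μ Tᶜ ≤ 2 * (c * 2⁻¹ ^ n) ∧
      ContinuousOn (fun x => min (ρ₂ x (q₂ n)) 1) T := by
    intro n
    refine VCaux.lusin_lite μ _ ?_ ?_ (mul_ne_zero hc0 (pow_ne_zero n (by norm_num)))
    · exact (hmeas₂.comp (measurable_id.prodMk measurable_const)).min measurable_const
    · intro x
      rw [abs_le]
      refine ⟨?_, min_le_right _ _⟩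
      have := le_min (nn₂ x (q₂ n)) zero_le_one
      linarith
  choose T₁ hT₁meas hT₁μ hT₁cont using lus₁
  choose T₂ hT₂meas hT₂μ hT₂cont using lus₂
  set T : Set X := (X₀₁ ∩ X₀₂) ∩ ((⋂ n, T₁ n) ∩ ⋂ n, T₂ n) with hT_def
  have hTmeas : MeasurableSet T :=
    (hX₀₁meas.inter hX₀₂meas).inter
      ((MeasurableSet.iInter hT₁meas).inter (MeasurableSet.iInter hT₂meas))
  have hcompl₁ : μ X₀₁ᶜ = 0 := by
    rw [prob_compl_eq_one_sub hX₀₁meas, hX₀₁μ, tsub_self]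
  have hcompl₂ : μ X₀₂ᶜ = 0 := by
    rw [prob_compl_eq_one_sub hX₀₂meas, hX₀₂μ, tsub_self]
  have hiUnion_bound : ∀ (S : ℕ → Set X), (∀ n, μ (S n)ᶜ ≤ 2 * (c * 2⁻¹ ^ n)) →
      μ (⋃ n, (S n)ᶜ) ≤ 4 * c := by
    intro S hS
    refine (measure_iUnion_le _).trans ?_
    calc ∑' n, μ (S n)ᶜ ≤ ∑' n : ℕ, (2*c) * 2⁻¹ ^ n :=
          ENNReal.tsum_le_tsum (fun n => (hS n).trans_eq (by ring))
      _ = 2 * (2 * c) := VCaux.geom_sum_bound _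
      _ = 4 * c := by ring
  have hTc : μ Tᶜ ≤ 8 * c := by
    have hTc_eq : Tᶜ = (X₀₁ᶜ ∪ X₀₂ᶜ) ∪ ((⋃ n, (T₁ n)ᶜ) ∪ ⋃ n, (T₂ n)ᶜ) := by
      rw [hT_def]
      simp only [Set.compl_inter, Set.compl_iInter]
    rw [hTc_eq]
    refine (measure_union_le _ _).trans ?_
    have h1 : μ (X₀₁ᶜ ∪ X₀₂ᶜ) = 0 := measure_union_null hcompl₁ hcompl₂
    rw [h1, zero_add]
    refine (measure_union_le _ _).trans ?_
    calc μ (⋃ n, (T₁ n)ᶜ) + μ (⋃ n, (T₂ n)ᶜ) ≤ 4 * c + 4 * c :=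
          add_le_add (hiUnion_bound T₁ hT₁μ) (hiUnion_bound T₂ hT₂μ)
      _ = 8 * c := by ring
  obtain ⟨F, hFsub, hFclosed, hFμ⟩ := hTmeas.exists_isClosed_lt_add (measure_ne_top μ T) hc0
  have hTF : μ (T \ F) < c :=
    measure_diff_lt_of_lt_add hFclosed.measurableSet.nullMeasurableSet hFsub
      (measure_ne_top μ F) hFμ
  obtain ⟨C, hCcomp, hCμ⟩ := VCaux.exists_compact_compl_le μ hc0
  set K : Set X := F ∩ C with hK_def
  have hKcomp : IsCompact K := hCcomp.inter_left hFclosed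
  have hKmeas : MeasurableSet K := hFclosed.measurableSet.inter hCcomp.isClosed.measurableSet
  have hKsubT : K ⊆ T := fun x hx => hFsub hx.1
  have hKc : μ Kᶜ < m := by
    have hsub : Kᶜ ⊆ (Tᶜ ∪ (T \ F)) ∪ Cᶜ := by
      intro x hx
      rw [hK_def, Set.mem_compl_iff, Set.mem_inter_iff, not_and_or] at hx
      rcases hx with hx | hx
      · by_cases hxT : x ∈ T
        · exact Or.inl (Or.inr ⟨hxT, hx⟩)
        · exact Or.inl (Or.inl hxT)
      · exact Or.inr hx
    calc μ Kᶜ ≤ μ (Tᶜ ∪ (T \ F)) + μ Cᶜ :=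
          (measure_mono hsub).trans (measure_union_le _ _)
      _ ≤ (μ Tᶜ + μ (T \ F)) + μ Cᶜ := add_le_add_left (measure_union_le _ _) _
      _ ≤ (8 * c + c) + 2 * c := add_le_add (add_le_add hTc hTF.le) hCμ
      _ = 11 * c := by ring
      _ < 16 * c := ENNReal.mul_lt_mul_left hc0 hctop (by norm_num)
      _ = m := by
          rw [hc_def, mul_comm m _, ← mul_assoc,
            ENNReal.mul_inv_cancel (by norm_num) (by norm_num), one_mul]
  -- continuity and density facts on K
  have hKT₁ : ∀ n, K ⊆ T₁ n := fun n x hx => Set.mem_iInter.1 (hKsubT hx).2.1 n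
  have hKT₂ : ∀ n, K ⊆ T₂ n := fun n x hx => Set.mem_iInter.1 (hKsubT hx).2.2 n
  have hKX₀₁ : K ⊆ X₀₁ := fun x hx => (hKsubT hx).1.1
  have hKX₀₂ : K ⊆ X₀₂ := fun x hx => (hKsubT hx).1.2
  have hconta : ∀ n, ContinuousOn (fun x => min (ρ₁ x (q₁ n)) 1) K :=
    fun n => (hT₁cont n).mono (hKT₁ n)
  have hcontb : ∀ n, ContinuousOn (fun x => min (ρ₂ x (q₂ n)) 1) K :=
    fun n => (hT₂cont n).mono (hKT₂ n)
  have hdens₁ : ∀ z ∈ K, ∀ e : ℝ, 0 < e → ∃ n, ρ₁ z (q₁ n) < e := by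
    intro z hz e he
    obtain ⟨d, hd, hlt⟩ := hD₁dense z (hKX₀₁ hz) e he
    rw [hq₁] at hd
    obtain ⟨n, rfl⟩ := hd
    exact ⟨n, hlt⟩
  have hdens₂ : ∀ z ∈ K, ∀ e : ℝ, 0 < e → ∃ n, ρ₂ z (q₂ n) < e := by
    intro z hz e he
    obtain ⟨d, hd, hlt⟩ := hD₂dense z (hKX₀₂ hz) e he
    rw [hq₂] at hd
    obtain ⟨n, rfl⟩ := hd
    exact ⟨n, hlt⟩
  -- Lemma A: topological convergence within K implies ρ-convergence
  have lemA : ∀ (ρ : X → X → ℝ) (q : ℕ → X),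
      (∀ a b, ρ a b = ρ b a) → (∀ a b c', ρ a c' ≤ ρ a b + ρ b c') →
      (∀ n, ContinuousOn (fun x => min (ρ x (q n)) 1) K) →
      (∀ z ∈ K, ∀ e : ℝ, 0 < e → ∃ n, ρ z (q n) < e) →
      ∀ (w : ℕ → X) (z : X), (∀ k, w k ∈ K) → z ∈ K →
        Filter.Tendsto w Filter.atTop (nhds z) →
        ∀ e : ℝ, 0 < e → ∀ᶠ k in Filter.atTop, ρ (w k) z < e := by
    intro ρ q hsy htr hcont hdens w z hw hz hwz e he
    set e' := min e 1 with he'def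
    have he' : 0 < e' := lt_min he one_pos
    have he'le : e' ≤ e := min_le_left _ _
    have he'1 : e' ≤ 1 := min_le_right _ _
    obtain ⟨n, hn⟩ := hdens z hz (e'/3) (by positivity)
    have hwz' : Filter.Tendsto w Filter.atTop (nhdsWithin z K) :=
      tendsto_nhdsWithin_iff.2 ⟨hwz, Filter.Eventually.of_forall hw⟩
    have hg : Filter.Tendsto (fun k => min (ρ (w k) (q n)) 1) Filter.atTop
        (nhds (min (ρ z (q n)) 1)) := Filter.Tendsto.comp (hcont n z hz) hwz'
    have hlt : min (ρ z (q n)) 1 < 2*e'/3 := by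
      have h1 := min_le_left (ρ z (q n)) 1
      linarith
    filter_upwards [hg.eventually_lt_const hlt] with k hk
    have hk' : ρ (w k) (q n) < 2*e'/3 := by
      rcases min_lt_iff.1 hk with h | h
      · exact h
      · exfalso; linarith
    calc ρ (w k) z ≤ ρ (w k) (q n) + ρ (q n) z := htr _ _ _
      _ = ρ (w k) (q n) + ρ z (q n) := by rw [hsy (q n) z]
      _ < 2*e'/3 + e'/3 := by linarith
      _ ≤ e := by linarith
  -- the key symmetric statement
  have key : ∀ (ρa ρb : X → X → ℝ) (qa qb : ℕ → X),
      (∀ a b, ρa a b = ρa b a) → (∀ a b c', ρa a c' ≤ ρa a b + ρa b c') →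
      (∀ a b, 0 ≤ ρa a b) → (∀ a b, ρa a b = 0 → a = b) →
      (∀ a b, ρb a b = ρb b a) → (∀ a b c', ρb a c' ≤ ρb a b + ρb b c') →
      (∀ n, ContinuousOn (fun x => min (ρa x (qa n)) 1) K) →
      (∀ n, ContinuousOn (fun x => min (ρb x (qb n)) 1) K) →
      (∀ z ∈ K, ∀ e : ℝ, 0 < e → ∃ n, ρa z (qa n) < e) →
      (∀ z ∈ K, ∀ e : ℝ, 0 < e → ∃ n, ρb z (qb n) < e) →
      ∀ x ∈ K, ∀ δ : ℝ, 0 < δ → ∃ η : ℝ, 0 < η ∧ ∀ y ∈ K, ρa x y < η → ρb x y < δ := by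
    intro ρa ρb qa qb hsya htra hnna hmeta hsyb htrb hca hcb hda hdb x hx δ hδ
    by_contra hcon
    push_neg at hcon
    have H : ∀ k : ℕ, ∃ y, y ∈ K ∧ ρa x y < 1/(k+1) ∧ δ ≤ ρb x y := by
      intro k
      obtain ⟨y, hyK, hy1, hy2⟩ := hcon (1/(k+1)) (by positivity)
      exact ⟨y, hyK, hy1, hy2⟩
    choose y hyK hy1 hy2 using H
    obtain ⟨z, hzK, φ, hφ, hφt⟩ := hKcomp.tendsto_subseq hyK
    have hxz : ρa x z = 0 := by
      have hub : ∀ e : ℝ, 0 < e → ρa x z < e := by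
        intro e he
        have h1 := lemA ρa qa hsya htra hca hda (y ∘ φ) z (fun k => hyK _) hzK hφt (e/2)
          (by positivity)
        obtain ⟨k0, hk0⟩ := exists_nat_one_div_lt (half_pos he)
        obtain ⟨k, hkρ, hkge⟩ := (h1.and (Filter.eventually_ge_atTop k0)).exists
        have hk0φ : (k0:ℝ) + 1 ≤ (φ k : ℝ) + 1 := by
          have : k0 ≤ φ k := le_trans hkge hφ.le_apply
          exact_mod_cast Nat.succ_le_succ this
        have hle : (1:ℝ)/(φ k + 1) ≤ 1/(k0+1) :=
          one_div_le_one_div_of_le (by positivity) hk0φ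
        have h2 := hy1 (φ k)
        calc ρa x z ≤ ρa x (y (φ k)) + ρa (y (φ k)) z := htra _ _ _
          _ < 1/(φ k+1) + e/2 := by
              have : ρa (y (φ k)) z < e/2 := hkρ
              push_cast
              push_cast at h2
              linarith
          _ ≤ 1/(k0+1) + e/2 := by linarith
          _ ≤ e := by linarith
      by_contra hne
      exact absurd (hub _ (lt_of_le_of_ne (hnna x z) (Ne.symm hne))) (lt_irrefl _)
    have hxz' : x = z := hmeta x z hxz
    obtain ⟨k, hkk⟩ :=
      (lemA ρb qb hsyb htrb hcb hdb (y ∘ φ) z (fun k => hyK _) hzK hφt δ hδ).exists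
    have h2 := hy2 (φ k)
    rw [hxz', hsyb] at h2
    have h3 : ρb (y (φ k)) z < δ := hkk
    linarith
  refine ⟨K, hKmeas, ?_,
    key ρ₁ ρ₂ q₁ q₂ sy₁ tr₁ nn₁ hmet₁ sy₂ tr₂ hconta hcontb hdens₁ hdens₂,
    key ρ₂ ρ₁ q₂ q₁ sy₂ tr₂ nn₂ hmet₂ sy₁ tr₁ hcontb hconta hdens₂ hdens₁⟩
  -- the measure estimate
  have hadd : μ K + μ Kᶜ = 1 := by
    rw [measure_add_measure_compl hKmeas, measure_univ]
  have h1lt : (1:ℝ≥0∞) < μ K + ENNReal.ofReal ε := by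
    calc (1:ℝ≥0∞) = μ K + μ Kᶜ := hadd.symm
      _ < μ K + m := ENNReal.add_lt_add_left (measure_ne_top μ K) hKc
      _ ≤ μ K + ENNReal.ofReal ε := add_le_add_right (min_le_left _ _) _
  rcases le_or_gt (ENNReal.ofReal ε) 1 with hle | hlt
  · exact ENNReal.sub_lt_of_lt_add hle h1lt
  · rw [tsub_eq_zero_of_le hlt.le]
    rw [pos_iff_ne_zero]
    intro h0
    rw [h0, zero_add] at hadd
    rw [hadd] at hKc
    exact absurd (lt_of_lt_of_le hKc hm1) (lt_irrefl _)


end VirtCont
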